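/- For −1 ≤ m ≤ n, the truncated coupled sum differences satisfy E[(Z̄_n − Z̄_m)²] = E[(Y_m − Y_n)²]/q_{m+1} + ∑_{i=m+1}^{n} E[(Y_i − Y_n)²] (1/q_{i+1} − 1/q_i). -/

import Mathlib

open MeasureTheory ProbabilityTheory Filter

/-- The increments `Δ_k = Y_k - Y_{k-1}` with the convention `Y_{-1} = 0`. -/
noncomputable def diffSeq {Ω : Type*} (Y : ℕ → Ω → ℝ) : ℕ → Ω → ℝ :=
  fun k ω => Y k ω - if k = 0 then 0 else Y (k - 1) ω

/-- `Y` indexed by integers, with `Y_j = 0` for `j < 0`. -/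
noncomputable def YInt {Ω : Type*} (Y : ℕ → Ω → ℝ) : ℤ → Ω → ℝ :=
  fun j ω => if j < 0 then 0 else Y j.toNat ω

/-- `Z̄_n = ∑_{k=0}^{n ∧ N} (Y_k - Y_{k-1}) / q_k`, with `Z̄_{-1} = 0`. -/
noncomputable def coupledSumTrunc {Ω : Type*} (Y : ℕ → Ω → ℝ) (q : ℕ → ℝ)
    (N : Ω → ℕ) : ℤ → Ω → ℝ :=
  fun j ω => if j < 0 then 0
    else ∑ k ∈ Finset.range (min j.toNat (N ω) + 1), diffSeq Y k ω / q k

/-! Write `S_j = ∑_{j ≤ k < J} 1{k ≤ N} Δ_k / q_k`, so that `Z̄_n - Z̄_m = S_{m+1}` with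
`J = n + 1`. Peeling off the first summand, `S_j² - S_{j+1}² = (Δ_j / q_j) (S_j + S_{j+1})`,
because on `{N < j}` everything vanishes. Independence of `N` and `Y` turns
`E[X · 1{k ≤ N} Δ_k / q_k]` into `E[X Δ_k]` for every `X = f(Y)`, after which both sums
telescope and `E[S_j²] = E[S_{j+1}²] + (E[(Y_{j-1} - Y_n)²] - E[(Y_j - Y_n)²]) / q_j`.
Summing this recursion (Abel summation) gives the formula. -/

theorem ProbabilityTheory.IndepFun.integral_indicator_preimage {Ω β : Type*} [MeasurableSpace Ω]
    [MeasurableSpace β] {μ : Measure Ω} {X : Ω → ℝ} {N : Ω → β} (hXN : IndepFun X N μ)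
    (hX : AEStronglyMeasurable X μ) (hN : Measurable N) {s : Set β} (hs : MeasurableSet s) :
    ∫ ω, (N ⁻¹' s).indicator X ω ∂μ = μ.real (N ⁻¹' s) * ∫ ω, X ω ∂μ := by
  have hψ : Measurable (s.indicator (1 : β → ℝ)) := measurable_const.indicator hs
  have hind : IndepFun X (fun ω => s.indicator 1 (N ω)) μ := hXN.comp measurable_id hψ
  calc ∫ ω, (N ⁻¹' s).indicator X ω ∂μ = ∫ ω, X ω * s.indicator 1 (N ω) ∂μ := by
        congr 1 with ω
        by_cases hω : N ω ∈ s <;> simp [Set.indicator, hω]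
    _ = μ.real (N ⁻¹' s) * ∫ ω, X ω ∂μ := by
        rw [hind.integral_fun_mul_eq_mul_integral hX (hψ.comp hN).aestronglyMeasurable, mul_comm,
          ← integral_indicator_one (hN hs)]
        rfl

theorem Finset.sum_Icc_int_eq_sum_Ico_toNat {M : Type*} [AddCommMonoid M] (f : ℤ → M) {a b : ℤ}
    (ha : 0 ≤ a) : ∑ i ∈ Finset.Icc a b, f i = ∑ k ∈ Finset.Ico a.toNat (b + 1).toNat, f k := by
  refine Finset.sum_nbij' Int.toNat (↑) ?_ ?_ ?_ ?_ ?_ <;> intro i hi <;>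
    simp only [Finset.mem_Icc, Finset.mem_Ico] at hi
  · simp only [Finset.mem_Ico]; omega
  · simp only [Finset.mem_Icc]; omega
  · omega
  · simp
  · rw [Int.toNat_of_nonneg (by omega)]

noncomputable def coupledTerm {Ω : Type*} (W : ℕ → Ω → ℝ) (q : ℕ → ℝ) (N : Ω → ℕ) (k : ℕ) :
    Ω → ℝ :=
  {ω | k ≤ N ω}.indicator fun ω => (W (k + 1) ω - W k ω) / q k

section
variable {Ω : Type*} [MeasurableSpace Ω] {μ : Measure Ω}
  {W : ℕ → Ω → ℝ} {q : ℕ → ℝ} {N : Ω → ℕ}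

theorem integral_mul_coupledTerm (hindep : IndepFun (fun ω i => W i ω) N μ) (hN : Measurable N)
    {k : ℕ} (hqk : μ.real {ω | k ≤ N ω} = q k) (hk : q k ≠ 0) {ψ : (ℕ → ℝ) → ℝ} (hψ : Measurable ψ)
    (hX : AEStronglyMeasurable (fun ω => ψ (fun i => W i ω) * (W (k + 1) ω - W k ω)) μ) :
    ∫ ω, ψ (fun i => W i ω) * coupledTerm W q N k ω ∂μ =
      ∫ ω, ψ (fun i => W i ω) * (W (k + 1) ω - W k ω) ∂μ := by
  have hind : IndepFun (fun ω => ψ (fun i => W i ω) * (W (k + 1) ω - W k ω) / q k) N μ :=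
    hindep.comp (φ := fun w => ψ w * (w (k + 1) - w k) / q k) (by fun_prop) measurable_id
  have hindicator := hind.integral_indicator_preimage
    (by simpa only [div_eq_mul_inv] using hX.mul_const (q k)⁻¹) hN (measurableSet_Ici (a := k))
  rw [show N ⁻¹' Set.Ici k = {ω | k ≤ N ω} from rfl, hqk, integral_div,
    mul_div_cancel₀ _ hk] at hindicator
  rw [← hindicator]
  congr 1 with ω
  by_cases hω : k ≤ N ω <;> simp [coupledTerm, Set.indicator, hω, mul_div_assoc]

theorem memLp_coupledTerm (hW : ∀ k, MemLp (W k) 2 μ) (hN : Measurable N) (k : ℕ) :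
    MemLp (coupledTerm W q N k) 2 μ :=
  (((hW (k + 1)).sub (hW k)).mul_const (q k)⁻¹).indicator (hN measurableSet_Ici)

theorem integral_mul_sum_coupledTerm (hW : ∀ k, MemLp (W k) 2 μ)
    (hindep : IndepFun (fun ω i => W i ω) N μ) (hN : Measurable N)
    (hNq : ∀ k, μ.real {ω | k ≤ N ω} = q k) (hq : ∀ k, q k ≠ 0) {ψ : (ℕ → ℝ) → ℝ}
    (hψ : Measurable ψ) (hX : MemLp (fun ω => ψ (fun i => W i ω)) 2 μ) {a J : ℕ} (haJ : a ≤ J) :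
    ∫ ω, ψ (fun i => W i ω) * ∑ k ∈ Finset.Ico a J, coupledTerm W q N k ω ∂μ =
      ∫ ω, ψ (fun i => W i ω) * (W J ω - W a ω) ∂μ := by
  have hXΔ : ∀ k, Integrable (fun ω => ψ (fun i => W i ω) * (W (k + 1) ω - W k ω)) μ :=
    fun k => hX.integrable_mul ((hW (k + 1)).sub (hW k))
  calc ∫ ω, ψ (fun i => W i ω) * ∑ k ∈ Finset.Ico a J, coupledTerm W q N k ω ∂μ
      = ∑ k ∈ Finset.Ico a J, ∫ ω, ψ (fun i => W i ω) * coupledTerm W q N k ω ∂μ := by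
        simp_rw [Finset.mul_sum]
        exact integral_finsetSum _ fun k _ => hX.integrable_mul (memLp_coupledTerm hW hN k)
    _ = ∑ k ∈ Finset.Ico a J, ∫ ω, ψ (fun i => W i ω) * (W (k + 1) ω - W k ω) ∂μ :=
        Finset.sum_congr rfl fun k _ => integral_mul_coupledTerm hindep hN (hNq k) (hq k) hψ
          (hXΔ k).aestronglyMeasurable
    _ = ∫ ω, ψ (fun i => W i ω) * (W J ω - W a ω) ∂μ := by
        rw [← integral_finsetSum _ fun k _ => hXΔ k]
        congr 1 with ω
        rw [← Finset.mul_sum, Finset.sum_Ico_sub (fun k => W k ω) haJ]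

theorem integral_sq_sum_coupledTerm_eq_succ (hW : ∀ k, MemLp (W k) 2 μ)
    (hindep : IndepFun (fun ω i => W i ω) N μ) (hN : Measurable N)
    (hNq : ∀ k, μ.real {ω | k ≤ N ω} = q k) (hq : ∀ k, q k ≠ 0) {j J : ℕ} (hjJ : j < J) :
    ∫ ω, (∑ k ∈ Finset.Ico j J, coupledTerm W q N k ω) ^ 2 ∂μ =
      ∫ ω, (∑ k ∈ Finset.Ico (j + 1) J, coupledTerm W q N k ω) ^ 2 ∂μ +
        ((∫ ω, (W j ω - W J ω) ^ 2 ∂μ) - ∫ ω, (W (j + 1) ω - W J ω) ^ 2 ∂μ) / q j := by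
  set S : ℕ → Ω → ℝ := fun a ω => ∑ k ∈ Finset.Ico a J, coupledTerm W q N k ω
  set X : Ω → ℝ := fun ω => (W (j + 1) ω - W j ω) / q j
  have hS : ∀ a, MemLp (S a) 2 μ := fun a => memLp_finsetSum _ fun k _ => memLp_coupledTerm hW hN k
  have hX : MemLp X 2 μ := ((hW (j + 1)).sub (hW j)).mul_const (q j)⁻¹
  have hdiff : ∀ a b, MemLp (fun ω => W a ω - W b ω) 2 μ := fun a b => (hW a).sub (hW b)
  have hmul : ∀ {f g : Ω → ℝ}, MemLp f 2 μ → MemLp g 2 μ → Integrable (fun ω => f ω * g ω) μ :=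
    fun hf hg => hf.integrable_mul hg
  have hXS : ∀ a, a ≤ J → ∫ ω, X ω * S a ω ∂μ = ∫ ω, X ω * (W J ω - W a ω) ∂μ := fun a ha =>
    integral_mul_sum_coupledTerm hW hindep hN hNq hq (ψ := fun w => (w (j + 1) - w j) / q j)
      (by fun_prop) hX ha
  -- On `{N < j}` both summands vanish, and on `{j ≤ N}` the first one is `X`.
  have hpt : ∀ ω, S j ω ^ 2 = S (j + 1) ω ^ 2 + X ω * S j ω + X ω * S (j + 1) ω := by
    intro ω
    have hsplit : S j ω = coupledTerm W q N j ω + S (j + 1) ω :=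
      Finset.sum_eq_sum_Ico_succ_bot hjJ _
    by_cases hω : j ≤ N ω
    · have hj : coupledTerm W q N j ω = X ω := Set.indicator_of_mem (s := {ω | j ≤ N ω}) hω _
      rw [hsplit, hj]
      ring
    · have hj : coupledTerm W q N j ω = 0 := Set.indicator_of_notMem (s := {ω | j ≤ N ω}) hω _
      have hD : S (j + 1) ω = 0 := Finset.sum_eq_zero fun k hk =>
        Set.indicator_of_notMem (s := {ω | k ≤ N ω})
          (show ¬k ≤ N ω by simp only [Finset.mem_Ico] at hk; omega) _
      rw [hsplit, hj, hD]
      ring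
  calc ∫ ω, S j ω ^ 2 ∂μ
      = ∫ ω, S (j + 1) ω ^ 2 ∂μ + ∫ ω, X ω * S j ω ∂μ + ∫ ω, X ω * S (j + 1) ω ∂μ := by
        simp_rw [hpt]
        rw [integral_add _ (hmul hX (hS _)), integral_add (hS _).integrable_sq (hmul hX (hS _))]
        exact (hS _).integrable_sq.add (hmul hX (hS _))
    _ = ∫ ω, S (j + 1) ω ^ 2 ∂μ +
          ∫ ω, ((W j ω - W J ω) ^ 2 - (W (j + 1) ω - W J ω) ^ 2) / q j ∂μ := by
        rw [hXS j hjJ.le, hXS (j + 1) hjJ, add_assoc,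
          ← integral_add (hmul hX (hdiff J j)) (hmul hX (hdiff J (j + 1)))]
        congr 2 with ω
        ring
    _ = _ := by
        rw [integral_div, integral_sub (hdiff j J).integrable_sq (hdiff (j + 1) J).integrable_sq]

theorem integral_sq_sum_coupledTerm (hW : ∀ k, MemLp (W k) 2 μ)
    (hindep : IndepFun (fun ω i => W i ω) N μ) (hN : Measurable N)
    (hNq : ∀ k, μ.real {ω | k ≤ N ω} = q k) (hq : ∀ k, q k ≠ 0) {j J : ℕ} (hjJ : j ≤ J) :
    ∫ ω, (∑ k ∈ Finset.Ico j J, coupledTerm W q N k ω) ^ 2 ∂μ =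
      (∫ ω, (W j ω - W J ω) ^ 2 ∂μ) / q j +
        ∑ i ∈ Finset.Ico j J, (∫ ω, (W (i + 1) ω - W J ω) ^ 2 ∂μ) * (1 / q (i + 1) - 1 / q i) := by
  induction hjJ using Nat.decreasingInduction with
  | self => simp
  | of_succ j hj ih =>
    rw [integral_sq_sum_coupledTerm_eq_succ hW hindep hN hNq hq hj, ih,
      Finset.sum_eq_sum_Ico_succ_bot hj]
    ring

end

section
variable {Ω : Type*}

-- Shifting the index moves the convention `Y_{-1} = 0` into `ℕ`: `shiftY Y k` is `Y_{k-1}`.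
noncomputable def shiftY (Y : ℕ → Ω → ℝ) (k : ℕ) (ω : Ω) : ℝ :=
  if k = 0 then 0 else Y (k - 1) ω

theorem shiftY_succ (Y : ℕ → Ω → ℝ) (k : ℕ) : shiftY Y (k + 1) = Y k := rfl

theorem YInt_natCast (Y : ℕ → Ω → ℝ) (k : ℕ) : YInt Y k = Y k := by
  ext ω
  simp [YInt]

theorem YInt_eq_shiftY {Y : ℕ → Ω → ℝ} {m : ℤ} (hm : -1 ≤ m) :
    YInt Y m = shiftY Y (m + 1).toNat := by
  ext ω
  rcases hm.eq_or_lt with rfl | hm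
  · simp [YInt, shiftY]
  · simp only [YInt, shiftY, if_neg (by omega : ¬m < 0), if_neg (by omega : (m + 1).toNat ≠ 0)]
    congr 2
    omega

theorem coupledSumTrunc_eq_sum_coupledTerm (Y : ℕ → Ω → ℝ) (q : ℕ → ℝ) (N : Ω → ℕ) {m : ℤ}
    (hm : -1 ≤ m) (ω : Ω) :
    coupledSumTrunc Y q N m ω =
      ∑ k ∈ Finset.range (m + 1).toNat, coupledTerm (shiftY Y) q N k ω := by
  rcases hm.eq_or_lt with rfl | hm
  · simp [coupledSumTrunc]
  · simp only [coupledSumTrunc, coupledTerm, if_neg (by omega : ¬m < 0), Set.indicator_apply,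
      Set.mem_ofPred_eq, ← Finset.sum_filter]
    refine Finset.sum_congr ?_ fun k _ => ?_
    · ext k
      simp only [Finset.mem_range, Finset.mem_filter]
      omega
    · cases k <;> simp [diffSeq, shiftY]

theorem memLp_shiftY [MeasurableSpace Ω] {μ : Measure Ω} {Y : ℕ → Ω → ℝ}
    (hY : ∀ n, MemLp (Y n) 2 μ) (k : ℕ) :
    MemLp (shiftY Y k) 2 μ := by
  cases k with
  | zero => exact MemLp.zero
  | succ k => exact hY k

theorem indepFun_shiftY [MeasurableSpace Ω] {μ : Measure Ω} {Y : ℕ → Ω → ℝ} {β : Type*}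
    [MeasurableSpace β] {N : Ω → β} (hindep : IndepFun (fun ω i => Y i ω) N μ) :
    IndepFun (fun ω k => shiftY Y k ω) N μ :=
  hindep.comp (φ := fun y k => if k = 0 then 0 else y (k - 1))
    (measurable_pi_lambda _ fun k => by cases k <;> simp [measurable_pi_apply]) measurable_id

end

theorem stmt_9_general {Ω : Type*} [MeasurableSpace Ω] (μ : Measure Ω)
    (Y : ℕ → Ω → ℝ)
    (hY : ∀ n, MemLp (Y n) 2 μ)
    (q : ℕ → ℝ)
    (hqpos : ∀ i, 0 < q i)
    (N : Ω → ℕ) (hNmeas : Measurable N)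
    (hindep : IndepFun (fun ω i => Y i ω) N μ)
    (hN : ∀ i, μ {ω | i ≤ N ω} = ENNReal.ofReal (q i))
    (m n : ℤ) (hm : -1 ≤ m) (hmn : m ≤ n) :
    ∫ ω, (coupledSumTrunc Y q N n ω - coupledSumTrunc Y q N m ω) ^ 2 ∂μ =
      (∫ ω, (YInt Y m ω - YInt Y n ω) ^ 2 ∂μ) / q (m + 1).toNat +
        ∑ i ∈ Finset.Icc (m + 1) n,
          (∫ ω, (YInt Y i ω - YInt Y n ω) ^ 2 ∂μ) *
            (1 / q (i.toNat + 1) - 1 / q i.toNat) := by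
  have hNq : ∀ k, μ.real {ω | k ≤ N ω} = q k := fun k => by
    rw [measureReal_def, hN, ENNReal.toReal_ofReal (hqpos k).le]
  have hsum : ∀ ω, coupledSumTrunc Y q N n ω - coupledSumTrunc Y q N m ω =
      ∑ k ∈ Finset.Ico (m + 1).toNat (n + 1).toNat, coupledTerm (shiftY Y) q N k ω := by
    intro ω
    rw [coupledSumTrunc_eq_sum_coupledTerm Y q N (hm.trans hmn),
      coupledSumTrunc_eq_sum_coupledTerm Y q N hm, Finset.sum_Ico_eq_sub _ (by omega)]
  simp_rw [hsum]
  rw [integral_sq_sum_coupledTerm (memLp_shiftY hY) (indepFun_shiftY hindep) hNmeas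
    hNq (fun k => (hqpos k).ne') (by omega : (m + 1).toNat ≤ (n + 1).toNat),
    Finset.sum_Icc_int_eq_sum_Ico_toNat _ (by omega : 0 ≤ m + 1), YInt_eq_shiftY hm,
    YInt_eq_shiftY (hm.trans hmn)]
  simp only [shiftY_succ, YInt_natCast, Int.toNat_natCast]

theorem stmt_9 {Ω : Type*} [MeasurableSpace Ω] (μ : Measure Ω)
    [IsProbabilityMeasure μ]
    (Y : ℕ → Ω → ℝ) (hYmeas : ∀ n, Measurable (Y n))
    (hY : ∀ n, MemLp (Y n) 2 μ)
    (q : ℕ → ℝ) (hq0 : q 0 = 1) (hqdec : ∀ i, q (i + 1) ≤ q i)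
    (hqpos : ∀ i, 0 < q i) (hqlim : Tendsto q atTop (nhds 0))
    (N : Ω → ℕ) (hNmeas : Measurable N)
    (hindep : IndepFun (fun ω i => Y i ω) N μ)
    (hN : ∀ i, μ {ω | i ≤ N ω} = ENNReal.ofReal (q i))
    (m n : ℤ) (hm : -1 ≤ m) (hmn : m ≤ n) :
    ∫ ω, (coupledSumTrunc Y q N n ω - coupledSumTrunc Y q N m ω) ^ 2 ∂μ =
      (∫ ω, (YInt Y m ω - YInt Y n ω) ^ 2 ∂μ) / q (m + 1).toNat +
        ∑ i ∈ Finset.Icc (m + 1) n,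
          (∫ ω, (YInt Y i ω - YInt Y n ω) ^ 2 ∂μ) *
            (1 / q (i.toNat + 1) - 1 / q i.toNat) :=
  stmt_9_general μ Y hY q hqpos N hNmeas hindep hN m n hm hmn
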